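/- arXiv:1004.1614 — 2 statements merged into one kernel-verified Lean document; each statement's English description precedes it below -/
import Mathlib

section
/- Intersection-provenance lower bound under composition: let O₁, O₂ be monotonic operators with finite input I₁, R₁ = O₁(I₁), R₂ = O₂(R₁), and r₂ ∈ R₂. Then the intersection-provenance of r₂ with respect to the composed operator O₂ ∘ O₁ on input I₁ contains ⋃_{r₁ ∈ P_int²(r₂)} P_int¹(r₁), where P_int²(r₂) is the intersection of all MISets of r₂ w.r.t. O₂ and input R₁, and P_int¹(r₁) is the intersection of all MISets of r₁ w.r.t. O₁ and input I₁. -/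
def MISetOf {R : Type*} [DecidableEq R] (O : Finset R → Finset R)
    (I : Finset R) (r : R) (M : Finset R) : Prop :=
  M ⊆ I ∧ r ∈ O M ∧ ∀ M' ⊂ M, r ∉ O M'

def Pint {R : Type*} [DecidableEq R] (O : Finset R → Finset R)
    (I : Finset R) (r : R) : Set R :=
  {x : R | ∀ M : Finset R, MISetOf O I r M → x ∈ M}

lemma exists_miset {R : Type*} [DecidableEq R] (O : Finset R → Finset R)
    (I : Finset R) (r : R) (S : Finset R) (hSI : S ⊆ I) (hrS : r ∈ O S) :
    ∃ M, M ⊆ S ∧ MISetOf O I r M := by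
  induction S using Finset.strongInductionOn with
  | _ S ih =>
    by_cases h : ∀ M' ⊂ S, r ∉ O M'
    · exact ⟨S, subset_rfl, hSI, hrS, h⟩
    · push_neg at h
      obtain ⟨M', hM'S, hrM'⟩ := h
      obtain ⟨M, hMs, hmi⟩ := ih M' hM'S (hM'S.subset.trans hSI) hrM'
      exact ⟨M, hMs.trans hM'S.subset, hmi⟩

theorem stmt17 {R : Type*} [DecidableEq R] (O₁ O₂ : Finset R → Finset R)
    (hmono₁ : ∀ I₁ I₂ : Finset R, I₁ ⊆ I₂ → O₁ I₁ ⊆ O₁ I₂)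
    (hmono₂ : ∀ I₁ I₂ : Finset R, I₁ ⊆ I₂ → O₂ I₁ ⊆ O₂ I₂)
    (I₁ : Finset R) (r₂ : R) (hr₂ : r₂ ∈ O₂ (O₁ I₁)) :
    (⋃ r₁ ∈ Pint O₂ (O₁ I₁) r₂, Pint O₁ I₁ r₁) ⊆
      Pint (fun S => O₂ (O₁ S)) I₁ r₂ := by
  intro x hx
  simp only [Set.mem_iUnion] at hx
  obtain ⟨r₁, hr₁, hx⟩ := hx
  intro M hM
  obtain ⟨hMI, hrM, _⟩ := hM
  -- r₂ ∈ O₂ (O₁ M), O₁ M ⊆ O₁ I₁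
  obtain ⟨M₂, hM₂s, hM₂⟩ := exists_miset O₂ (O₁ I₁) r₂ (O₁ M) (hmono₁ _ _ hMI) hrM
  have hr₁M : r₁ ∈ O₁ M := hM₂s (hr₁ M₂ hM₂)
  obtain ⟨M₁, hM₁s, hM₁⟩ := exists_miset O₁ I₁ r₁ M hMI hr₁M
  exact hM₁s (hx M₁ hM₁)
end

section
/- Union-provenance upper bound under composition: let O₁, O₂ be monotonic operators with finite input I₁, R₁ = O₁(I₁), R₂ = O₂(R₁), and r₂ ∈ R₂. Then the union-provenance of r₂ with respect to the composed operator O₂ ∘ O₁ on input I₁ is contained in ⋃_{r₁ ∈ P_uni²(r₂)} P_uni¹(r₁), where P_uni²(r₂) is the union of all MISets of r₂ w.r.t. O₂ and input R₁, and P_uni¹(r₁) is the union of all MISets of r₁ w.r.t. O₁ and input I₁. -/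
def Puni {R : Type*} [DecidableEq R] (O : Finset R → Finset R)
    (I : Finset R) (r : R) : Set R :=
  {x : R | ∃ M : Finset R, MISetOf O I r M ∧ x ∈ M}

lemma exists_minimal_subset {R : Type*} [DecidableEq R] (O : Finset R → Finset R) (r : R) :
    ∀ S : Finset R, r ∈ O S → ∃ M, M ⊆ S ∧ r ∈ O M ∧ ∀ M' ⊂ M, r ∉ O M' := by
  intro S
  induction S using Finset.strongInduction with
  | _ S ih =>
    intro hr
    by_cases h : ∃ M' ⊂ S, r ∈ O M'
    · obtain ⟨M', hM', hrM'⟩ := h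
      obtain ⟨M, hMs, hM⟩ := ih M' hM' hrM'
      exact ⟨M, hMs.trans hM'.subset, hM⟩
    · push_neg at h
      exact ⟨S, subset_rfl, hr, h⟩

theorem stmt18 {R : Type*} [DecidableEq R] (O₁ O₂ : Finset R → Finset R)
    (hmono₁ : ∀ I₁ I₂ : Finset R, I₁ ⊆ I₂ → O₁ I₁ ⊆ O₁ I₂)
    (hmono₂ : ∀ I₁ I₂ : Finset R, I₁ ⊆ I₂ → O₂ I₁ ⊆ O₂ I₂)
    (I₁ : Finset R) (r₂ : R) (hr₂ : r₂ ∈ O₂ (O₁ I₁)) :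
    Puni (fun S => O₂ (O₁ S)) I₁ r₂ ⊆
      ⋃ r₁ ∈ Puni O₂ (O₁ I₁) r₂, Puni O₁ I₁ r₁ := by
  rintro x ⟨M, ⟨hMI, hrM, hmin⟩, hxM⟩
  -- M is a MISet of r₂ for the composed operator, x ∈ M
  have hMx : M.erase x ⊂ M := Finset.erase_ssubset hxM
  have hne : r₂ ∉ O₂ (O₁ (M.erase x)) := hmin _ hMx
  -- minimal M₂ ⊆ O₁ M with r₂ ∈ O₂ M₂
  obtain ⟨M₂, hM₂s, hrM₂, hmin₂⟩ := exists_minimal_subset O₂ r₂ (O₁ M) hrM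
  have hM₂I : M₂ ⊆ O₁ I₁ := hM₂s.trans (hmono₁ _ _ hMI)
  -- exists r₁ ∈ M₂ with r₁ ∉ O₁ (M.erase x)
  have : ∃ r₁ ∈ M₂, r₁ ∉ O₁ (M.erase x) := by
    by_contra h
    push_neg at h
    exact hne (hmono₂ _ _ h hrM₂)
  obtain ⟨r₁, hr₁M₂, hr₁not⟩ := this
  have hr₁Puni : r₁ ∈ Puni O₂ (O₁ I₁) r₂ := ⟨M₂, ⟨hM₂I, hrM₂, hmin₂⟩, hr₁M₂⟩
  -- minimal M₁ ⊆ M with r₁ ∈ O₁ M₁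
  obtain ⟨M₁, hM₁s, hrM₁, hmin₁⟩ := exists_minimal_subset O₁ r₁ M (hM₂s hr₁M₂)
  have hxM₁ : x ∈ M₁ := by
    by_contra hx
    refine hr₁not (hmono₁ _ _ (fun y hy => Finset.mem_erase.2
      ⟨?_, hM₁s hy⟩) hrM₁)
    rintro rfl
    exact hx hy
  refine Set.mem_biUnion hr₁Puni ⟨M₁, ⟨hM₁s.trans hMI, hrM₁, hmin₁⟩, hxM₁⟩
end
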